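/- arXiv:2604.20212 — 2 statements merged into one kernel-verified Lean document; each statement's English description precedes it below -/
import Mathlib

section
/- The Jucys–Murphy elements y_1 = 1 and y_k = 1 + (q−q⁻¹)(T_{(1,k)} + T_{(2,k)} + ⋯ + T_{(k−1,k)}) of the Hecke algebra H_r pairwise commute: y_j y_k = y_k y_j for all 1 ≤ j, k ≤ r. -/
/-!
Write `y_k = 1 + (q - q⁻¹) L_k` with `L_k = ∑_{i<k} T_{(i,k)}` (`JMsum T k` below). For
`m ≤ k - 2`, `T_m` commutes with `L_k`: for `i < m` and `i > m + 1` it commutes with each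
`T_{(i,k)}` by the braid and distant relations, and the two remaining terms are
`T_m B T_m + B` with `B = T_{(m+1,k)}`, which commutes with `T_m` because
`T_m² = 1 + (q - q⁻¹) T_m`. For `j < k`, every `T_{(i,j)}` is a word in `T_1, …, T_{j-1}`,
letters of index at most `k - 2`, so `L_j` commutes with `L_k`.
-/

open Finset

noncomputable section

/-- The Hecke-algebra element `T_{(i,k)}` associated to the transposition `(i,k)`
(1-indexed, `i < k`), computed along the reduced word
`T_{(i,k)} = T_{k-1} ⋯ T_{i+1} T_i T_{i+1} ⋯ T_{k-1}`; here `Ttrans T i d = T_{(i, i+1+d)}`. -/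
def Ttrans {A : Type*} [Ring A] (T : ℕ → A) (i : ℕ) : ℕ → A :=
  fun d => Nat.rec (T i) (fun d' ih => T (i + 1 + d') * ih * T (i + 1 + d')) d

/-- The Jucys–Murphy element `y_k = 1 + (q - q⁻¹)(T_{(1,k)} + ⋯ + T_{(k-1,k)})`. -/
def JMy {K : Type*} [Field K] {A : Type*} [Ring A] [Algebra K A]
    (q : K) (T : ℕ → A) (k : ℕ) : A :=
  1 + (q - q⁻¹) • ∑ i ∈ Finset.Ico 1 k, Ttrans T i (k - i - 1)

section Words

variable {A : Type*} [Ring A]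

theorem Ttrans_succ (T : ℕ → A) (i d : ℕ) :
    Ttrans T i (d + 1) = T (i + 1 + d) * Ttrans T i d * T (i + 1 + d) := rfl

theorem Commute.Ttrans_right {x : A} {T : ℕ → A} {i : ℕ} :
    ∀ {d : ℕ}, (∀ n, i ≤ n → n ≤ i + d → Commute x (T n)) → Commute x (Ttrans T i d)
  | 0, h => h i le_rfl (by omega)
  | d + 1, h => by
    have hout := h (i + 1 + d) (by omega) (by omega)
    exact (hout.mul_right (Commute.Ttrans_right fun n h₁ h₂ => h n h₁ (by omega))).mul_right hout

theorem commute_braid_conj {s t u : A} (hb : t * s * t = s * t * s) (hu : Commute s u) :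
    Commute t (s * (t * u * t) * s) :=
  calc t * (s * (t * u * t) * s)
      = (t * s * t) * u * (t * s) := by simp only [mul_assoc]
    _ = s * t * (s * u) * (t * s) := by rw [hb]; simp only [mul_assoc]
    _ = s * t * u * (s * t * s) := by rw [hu.eq]; simp only [mul_assoc]
    _ = s * (t * u * t) * s * t := by rw [← hb]; simp only [mul_assoc]

theorem commute_mul_mul_add_of_mul_self_eq {R : Type*} [CommSemiring R] [Algebra R A]
    {t : A} {c : R} (ht : t * t = 1 + c • t) (b : A) : Commute t (t * b * t + b) := by
  have hl : t * (t * b * t) = b * t + c • (t * b * t) := by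
    rw [← mul_assoc, ← mul_assoc, ht]; simp only [add_mul, one_mul, smul_mul_assoc]
  have hr : t * b * t * t = t * b + c • (t * b * t) := by
    rw [mul_assoc _ t t, ht]; simp only [mul_add, mul_one, mul_smul_comm]
  unfold Commute SemiconjBy
  rw [mul_add, add_mul, hl, hr]
  abel

end Words

def JMsum {A : Type*} [Ring A] (T : ℕ → A) (k : ℕ) : A :=
  ∑ i ∈ Ico 1 k, Ttrans T i (k - i - 1)

theorem JMy_eq {K : Type*} [Field K] {A : Type*} [Ring A] [Algebra K A] (q : K) (T : ℕ → A)
    (k : ℕ) : JMy q T k = 1 + (q - q⁻¹) • JMsum T k := rfl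

structure BraidRelations {A : Type*} [Ring A] (T : ℕ → A) (n : ℕ) : Prop where
  braid : ∀ a, 1 ≤ a → a + 1 ≤ n → T a * T (a + 1) * T a = T (a + 1) * T a * T (a + 1)
  comm : ∀ a b, 1 ≤ a → a + 1 < b → b ≤ n → Commute (T a) (T b)

namespace BraidRelations

variable {A : Type*} [Ring A] {T : ℕ → A} {n : ℕ}

theorem commute_of_far (hT : BraidRelations T n) {a b : ℕ} (ha : 1 ≤ a) (hb : 1 ≤ b)
    (han : a ≤ n) (hbn : b ≤ n) (hab : a + 1 < b ∨ b + 1 < a) : Commute (T a) (T b) := by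
  rcases hab with hab | hab
  · exact hT.comm a b ha hab hbn
  · exact (hT.comm b a hb hab han).symm

theorem commute_Ttrans_of_far (hT : BraidRelations T n) {m i d : ℕ} (hm : 1 ≤ m) (hmn : m ≤ n)
    (hi : 1 ≤ i) (hin : i + d ≤ n) (hfar : m + 1 < i ∨ i + d + 1 < m) :
    Commute (T m) (Ttrans T i d) :=
  Commute.Ttrans_right fun _ h₁ h₂ =>
    hT.commute_of_far hm (by omega) hmn (by omega) (by omega)

theorem mul_Ttrans_mul (hT : BraidRelations T n) {m : ℕ} (hm : 1 ≤ m) :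
    ∀ {d : ℕ}, m + 1 + d ≤ n → T m * Ttrans T (m + 1) d * T m = Ttrans T m (d + 1)
  | 0, _ => hT.braid m hm (by omega)
  | d + 1, hd => by
    have hc : Commute (T m) (T (m + 1 + (d + 1))) :=
      hT.comm m _ hm (by omega) hd
    rw [Ttrans_succ, Ttrans_succ T m (d + 1), ← hT.mul_Ttrans_mul hm (by omega),
      show m + 1 + 1 + d = m + 1 + (d + 1) by omega]
    simp only [mul_assoc, hc.left_comm, hc.eq]

theorem commute_Ttrans_of_lt_of_lt (hT : BraidRelations T n) {i m : ℕ} (hi : 1 ≤ i)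
    (him : i < m) : ∀ {d : ℕ}, m < i + d → i + d ≤ n → Commute (T m) (Ttrans T i d)
  | 0, hmd, _ => by omega
  | d + 1, hmd, hdn => by
    rw [Ttrans_succ]
    rcases Nat.lt_or_ge m (i + d) with hlt | hge
    · have hout : Commute (T m) (T (i + 1 + d)) := hT.comm m _ (by omega) (by omega) (by omega)
      exact (hout.mul_right (hT.commute_Ttrans_of_lt_of_lt hi him hlt (by omega))).mul_right hout
    · obtain ⟨f, rfl⟩ : ∃ f, d = f + 1 := ⟨d - 1, by omega⟩
      obtain rfl : m = i + 1 + f := by omega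
      rw [Ttrans_succ]
      exact commute_braid_conj (hT.braid _ (by omega) (by omega))
        (hT.commute_Ttrans_of_far (by omega) (by omega) hi (by omega) (by omega))

theorem commute_JMsum {R : Type*} [CommSemiring R] [Algebra R A] (hT : BraidRelations T n)
    {c : R} {m k : ℕ} (hm : 1 ≤ m) (hmk : m + 2 ≤ k) (hkn : k ≤ n + 1)
    (hsq : T m * T m = 1 + c • T m) : Commute (T m) (JMsum T k) := by
  obtain ⟨d, rfl⟩ : ∃ d, k = m + 2 + d := ⟨k - (m + 2), by omega⟩
  have hpair : ∑ i ∈ Ico m (m + 2), Ttrans T i (m + 2 + d - i - 1) =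
      T m * Ttrans T (m + 1) d * T m + Ttrans T (m + 1) d := by
    rw [sum_Ico_succ_top (by omega), sum_Ico_succ_top (by omega), Ico_self, sum_empty,
      zero_add, hT.mul_Ttrans_mul hm (by omega)]
    congr 2 <;> omega
  unfold JMsum
  rw [← sum_Ico_consecutive _ (by omega : 1 ≤ m) (by omega : m ≤ m + 2 + d),
    ← sum_Ico_consecutive _ (by omega : m ≤ m + 2) (by omega : m + 2 ≤ m + 2 + d), hpair]
  refine (Commute.sum_right _ _ _ fun i hi => ?_).add_right
    ((commute_mul_mul_add_of_mul_self_eq hsq _).add_right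
      (Commute.sum_right _ _ _ fun i hi => ?_)) <;> rw [mem_Ico] at hi
  · exact hT.commute_Ttrans_of_lt_of_lt hi.1 hi.2 (by omega) (by omega)
  · exact hT.commute_Ttrans_of_far hm (by omega) (by omega) (by omega) (by omega)

theorem commute_JMsum_JMsum {R : Type*} [CommSemiring R] [Algebra R A]
    (hT : BraidRelations T n) {c : R} (hsq : ∀ m, 1 ≤ m → m ≤ n → T m * T m = 1 + c • T m)
    {j k : ℕ} (hjk : j < k) (hkn : k ≤ n + 1) : Commute (JMsum T j) (JMsum T k) :=
  Commute.sum_left _ _ _ fun i hi => by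
    rw [mem_Ico] at hi
    exact (Commute.Ttrans_right fun m h₁ h₂ => (hT.commute_JMsum (by omega) (by omega) hkn
      (hsq m (by omega) (by omega))).symm).symm

end BraidRelations

theorem mul_self_eq_of_quadratic {K : Type*} [Field K] {A : Type*} [Ring A] [Algebra K A]
    {q : K} (hq : q ≠ 0) {t : A} (h : (t - q • 1) * (t + q⁻¹ • 1) = 0) :
    t * t = 1 + (q - q⁻¹) • t := by
  simp only [mul_add, sub_mul, smul_sub, smul_mul_assoc, mul_smul_comm, mul_one, one_mul,
    smul_smul, inv_mul_cancel₀ hq, one_smul] at h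
  linear_combination (norm := module) h

/-- In the Iwahori–Hecke algebra `H_r` of type A — i.e. in any algebra with elements
`T_1, …, T_{r-1}` satisfying the quadratic, braid, and distant-commutation relations —
the Jucys–Murphy elements `y_1, …, y_r` pairwise commute. -/
theorem jucys_murphy_commute {K : Type*} [Field K] {A : Type*} [Ring A] [Algebra K A]
    (q : K) (hq : q ≠ 0) (r : ℕ) (T : ℕ → A)
    (hquad : ∀ a, 1 ≤ a → a ≤ r - 1 → (T a - q • 1) * (T a + q⁻¹ • 1) = 0)
    (hbraid : ∀ a, 1 ≤ a → a + 1 ≤ r - 1 →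
      T a * T (a + 1) * T a = T (a + 1) * T a * T (a + 1))
    (hcomm : ∀ a b, 1 ≤ a → a ≤ r - 1 → 1 ≤ b → b ≤ r - 1 → a + 1 < b →
      T a * T b = T b * T a) :
    ∀ j k, 1 ≤ j → j ≤ r → 1 ≤ k → k ≤ r →
      JMy q T j * JMy q T k = JMy q T k * JMy q T j := by
  have hT : BraidRelations T (r - 1) :=
    ⟨hbraid, fun a b ha hab hb => hcomm a b ha (by omega) (by omega) hb hab⟩
  have hsq a (ha : 1 ≤ a) (har : a ≤ r - 1) := mul_self_eq_of_quadratic hq (hquad a ha har)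
  have hJM {j k : ℕ} (hjk : j < k) (hkr : k ≤ r) : Commute (JMy q T j) (JMy q T k) := by
    have hS := hT.commute_JMsum_JMsum hsq hjk (by omega)
    rw [JMy_eq, JMy_eq]
    exact (Commute.one_left _).add_left
      ((Commute.one_right _).add_right ((hS.smul_left _).smul_right _))
  intro j k _ hjr _ hkr
  rcases lt_trichotomy j k with hjk | rfl | hkj
  · exact (hJM hjk hkr).eq
  · rfl
  · exact (hJM hkj hjr).symm.eq

end
end

section
/- (Uniqueness of super characteristic roots) Let Γ(t) = Σ_{k≥0} (−1)^k α_k t^{m−n−k} be the characteristic series with coefficients α_k in an integral domain satisfying the vanishing conditions det(α_{λᵀ_i−i+j}) = 0 for λ = ((n+1)^{m+1},…) and det of the n×n Hankel-type matrix A = (α_{m−i+j})_{1≤i,j≤n} nonzero. Then over an algebraic closure of the fraction field there exist unique (up to reordering) elements ω_1,…,ω_m, ϖ_1,…,ϖ_n such that Γ(t)·Π_{i=1}^n (t − ϖ_i) = Π_{j=1}^m (t − ω_j). -/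
open Finset

noncomputable section

/-- Elementary symmetric function of the values of `v`. -/
def esymmOf {F : Type*} [CommRing F] {s : ℕ} (v : Fin s → F) (k : ℕ) : F :=
  ∑ S ∈ Finset.powersetCard k (Finset.univ : Finset (Fin s)), ∏ i ∈ S, v i

/-- The Laurent-series identity `Γ(t) ∏_{i=1}^n (t − ϖ_i) = ∏_{j=1}^m (t − ω_j)`,
where `Γ(t) = Σ_{k≥0} (−1)^k α_k t^{m−n−k}`, written out on the coefficients of `t`:
for every `c ≥ 0`, `Σ_{j=0}^{n} α_{c−j} e_j(ϖ) = e_c(ω)` (with `α` extended by `0`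
to negative indices, and `e_c(ω) = 0` for `c > m`). -/
def GammaFactors {F : Type*} [CommRing F] (m n : ℕ) (α : ℤ → F)
    (ω : Fin m → F) (ϖ : Fin n → F) : Prop :=
  ∀ c : ℕ, (∑ j ∈ Finset.range (n + 1), α ((c : ℤ) - (j : ℤ)) * esymmOf ϖ j)
    = esymmOf ω c

/-
Write `ē = (e₀(ϖ), …, eₙ(ϖ))`. Comparing coefficients, `Γ(t) ∏ (t - ϖᵢ) = ∏ (t - ωⱼ)` says that
`∑ⱼ α_{c-j} ēⱼ` vanishes for every `c > m` and equals `e_c(ω)` for `c ≤ m`. Since `ē₀ = 1`, the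
equations for `c = m + 1, …, m + n` form a linear system in `ē₁, …, ēₙ` whose matrix is `A`
up to the order of its columns, so `ē` exists and is unique. For `c > m + n`, Cramer's rule
expresses `(∑ⱼ α_{c-j} ēⱼ) · det A` as the bordered determinant (up to sign), which vanishes by
hypothesis. Finally, over an algebraically closed field every monic polynomial splits, and by
Vieta its roots are determined by its coefficients, so `ē` and `(e_c(ω))_{c ≤ m}` determine `ϖ`
and `ω` up to order.
-/

open Finset Matrix Polynomial

namespace Multiset

theorem exists_fin_map_univ_eq {α : Type*} {m : ℕ} (s : Multiset α) (hs : card s = m) :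
    ∃ v : Fin m → α, univ.val.map v = s := by
  subst hs
  refine ⟨fun i => s.toList.get (Fin.cast (by simp) i), ?_⟩
  rw [Fin.univ_val_map, ← s.coe_toList]
  congr 1
  apply List.ext_get <;> simp [Fin.cast]

theorem eq_of_card_eq_of_esymm_eq {R : Type*} [CommRing R] [IsDomain R] {s t : Multiset R}
    (hcard : card s = card t) (hesymm : ∀ k ≤ card s, s.esymm k = t.esymm k) : s = t := by
  have hprod : (s.map fun a => X - C a).prod = (t.map fun a => X - C a).prod := by
    rw [prod_X_sub_X_eq_sum_esymm, prod_X_sub_X_eq_sum_esymm, ← hcard]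
    refine Finset.sum_congr rfl fun k hk => ?_
    rw [hesymm k (Nat.lt_succ_iff.1 (Finset.mem_range.1 hk))]
  simpa only [roots_multiset_prod_X_sub_C] using congrArg roots hprod

theorem exists_card_eq_esymm_eq {K : Type*} [Field K] [IsAlgClosed K] {m : ℕ}
    (b : Fin (m + 1) → K) (hb : b 0 = 1) :
    ∃ s : Multiset K, card s = m ∧ ∀ k : Fin (m + 1), s.esymm k = b k := by
  set p : K[X] := ∑ k : Fin (m + 1), C ((-1) ^ (k : ℕ) * b k) * X ^ (m - k)
  have hcoeff : ∀ k : Fin (m + 1), p.coeff (m - k) = (-1) ^ (k : ℕ) * b k := by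
    intro k
    simp only [p, finsetSum_coeff, coeff_C_mul_X_pow]
    rw [Finset.sum_eq_single k (fun j _ hj => if_neg (by omega)) (by simp), if_pos rfl]
  have hlead : p.coeff m = 1 := by simpa [hb] using hcoeff 0
  have hdeg : p.natDegree = m :=
    le_antisymm
      (natDegree_sum_le_of_forall_le _ _ fun k _ =>
        (natDegree_C_mul_X_pow_le _ _).trans (Nat.sub_le m k))
      (le_natDegree_of_ne_zero (by simp [hlead]))
  have hmonic : p.Monic := by rw [Monic, leadingCoeff, hdeg, hlead]
  have hcard : card p.roots = p.natDegree := splits_iff_card_roots.1 (IsAlgClosed.splits p)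
  refine ⟨p.roots, hcard.trans hdeg, fun k => ?_⟩
  have hvieta := coeff_eq_esymm_roots_of_card hcard (k := m - k) (by omega)
  rw [hcoeff, hmonic.leadingCoeff, hdeg, Nat.sub_sub_self (by omega), one_mul] at hvieta
  exact (mul_left_cancel₀ (pow_ne_zero _ (neg_ne_zero.2 one_ne_zero)) hvieta).symm

end Multiset

section ElementarySymmetric

variable {R : Type*} [CommRing R] {s : ℕ}

def esymmVec (v : Fin s → R) : Fin (s + 1) → R := fun k => esymmOf v k

theorem esymmOf_eq_esymm (v : Fin s → R) (k : ℕ) : esymmOf v k = (univ.val.map v).esymm k :=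
  (Finset.esymm_map_val v univ k).symm

theorem esymmOf_of_lt {k : ℕ} (v : Fin s → R) (h : s < k) : esymmOf v k = 0 := by
  rw [esymmOf, powersetCard_eq_empty.2 (by simpa using h), sum_empty]

@[simp]
theorem esymmVec_zero (v : Fin s → R) : esymmVec v 0 = 1 := by
  simp [esymmVec, esymmOf]

theorem map_univ_eq_of_esymmVec_eq [IsDomain R] {v w : Fin s → R}
    (h : esymmVec v = esymmVec w) : univ.val.map v = univ.val.map w :=
  Multiset.eq_of_card_eq_of_esymm_eq (by simp) fun k hk => by
    simpa [esymmVec, esymmOf_eq_esymm] using congrFun h ⟨k, by simpa using Nat.lt_succ_of_le hk⟩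

theorem exists_esymmVec_eq {K : Type*} [Field K] [IsAlgClosed K] (b : Fin (s + 1) → K)
    (hb : b 0 = 1) : ∃ v : Fin s → K, esymmVec v = b := by
  obtain ⟨t, ht, hesymm⟩ := Multiset.exists_card_eq_esymm_eq b hb
  obtain ⟨v, rfl⟩ := t.exists_fin_map_univ_eq ht
  exact ⟨v, funext fun k => (esymmOf_eq_esymm v k).trans (hesymm k)⟩

end ElementarySymmetric

namespace Matrix

theorem det_mul_apply_zero_of_mulVec_succ_eq_zero {R : Type*} [CommRing R] {n : ℕ}
    (B : Matrix (Fin (n + 1)) (Fin (n + 1)) R) {v : Fin (n + 1) → R}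
    (hv : ∀ i : Fin n, (B *ᵥ v) i.succ = 0) :
    B.det * v 0 = (B *ᵥ v) 0 * (B.submatrix Fin.succ Fin.succ).det := by
  have hcramer : B.det * v 0 = (B.updateCol 0 (B *ᵥ v)).det := by
    rw [← cramer_apply, cramer_eq_adjugate_mulVec, mulVec_mulVec, adjugate_mul, smul_mulVec,
      one_mulVec, Pi.smul_apply, smul_eq_mul]
  rw [hcramer, det_succ_column_zero, Fin.sum_univ_succ, ← Fin.succAbove_zero,
    submatrix_updateCol_succAbove]
  simp [hv]

theorem existsUnique_apply_zero_eq_one_mulVec_eq_zero {K : Type*} [Field K] {n : ℕ}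
    (M : Matrix (Fin n) (Fin (n + 1)) K) (hM : (M.submatrix id Fin.succ).det ≠ 0) :
    ∃! v : Fin (n + 1) → K, v 0 = 1 ∧ M *ᵥ v = 0 := by
  set A := M.submatrix id Fin.succ
  have hcons : ∀ a x, M *ᵥ Fin.cons a x = a • (fun i => M i 0) + A *ᵥ x := fun a x => by
    ext i
    simp [A, mulVec, dotProduct, Fin.sum_univ_succ, mul_comm]
  have hA : IsUnit A.det := hM.isUnit
  refine ⟨Fin.cons 1 (-(A⁻¹ *ᵥ fun i => M i 0)), ⟨rfl, ?_⟩, fun w ⟨hw0, hw⟩ => ?_⟩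
  · rw [hcons, mulVec_neg, mulVec_mulVec, mul_nonsing_inv A hA, one_mulVec, one_smul,
      add_neg_cancel]
  · rw [← Fin.cons_self_tail w, hw0, hcons, one_smul] at hw
    rw [← Fin.cons_self_tail w, hw0]
    congr 1
    apply mulVec_injective_of_det_ne_zero hM
    rw [mulVec_neg, mulVec_mulVec, mul_nonsing_inv A hA, one_mulVec]
    exact eq_neg_of_add_eq_zero_right hw

end Matrix

section GammaRows

variable {R : Type*}

/-- `gammaRow α n c ⬝ᵥ esymmVec ϖ` is `(-1)ᶜ` times the coefficient of `t^(m - c)` in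
`Γ(t) ∏ (t - ϖᵢ)`. -/
def gammaRow (α : ℤ → R) (n c : ℕ) : Fin (n + 1) → R := fun j => α (c - j)

def gammaTailRows (α : ℤ → R) (m n : ℕ) : Matrix (Fin n) (Fin (n + 1)) R :=
  of fun i => gammaRow α n (m + n - i)

def gammaBordered (α : ℤ → R) (m n c : ℕ) : Matrix (Fin (n + 1)) (Fin (n + 1)) R :=
  of (vecCons (gammaRow α n c) fun i : Fin n => gammaRow α n (m + n - i))

theorem gammaTailRows_submatrix_succ (α : ℤ → R) (m n : ℕ) :
    (gammaTailRows α m n).submatrix id Fin.succ =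
      (of fun i j : Fin n => α ((m : ℤ) - ((i : ℕ) + 1) + ((j : ℕ) + 1))).submatrix
        id Fin.revPerm := by
  ext i j
  simp only [gammaTailRows, gammaRow, submatrix_apply, of_apply, id, Fin.revPerm_apply,
    Fin.val_succ, Fin.val_rev]
  congr 1
  omega

theorem gammaBordered_eq_submatrix (α : ℤ → R) (m n c : ℕ) :
    gammaBordered α m n c = (of fun i j : Fin (n + 1) =>
        if (i : ℕ) = 0 then α ((m : ℤ) - (m - c) - (n : ℤ) + (j : ℕ))
        else α ((m : ℤ) - ((i : ℕ) - 1 + 1) + ((j : ℕ) + 1))).submatrix id Fin.revPerm := by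
  ext i j
  refine Fin.cases ?_ (fun i => ?_) i <;>
    simp only [gammaBordered, gammaRow, submatrix_apply, of_apply, id, Fin.revPerm_apply,
      Fin.val_rev, cons_val_zero, cons_val_succ, Fin.val_zero, Fin.val_succ, Nat.add_one_ne_zero,
      if_true, if_false] <;>
    congr 1 <;> omega

variable [CommRing R] {α : ℤ → R} {m n : ℕ}

theorem gammaRow_zero_dotProduct (hα0 : α 0 = 1) (hαneg : ∀ z : ℤ, z < 0 → α z = 0)
    (v : Fin (n + 1) → R) : gammaRow α n 0 ⬝ᵥ v = v 0 := by
  rw [dotProduct, Fin.sum_univ_succ, Finset.sum_eq_zero fun j _ => by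
    rw [gammaRow, hαneg _ (by simp only [Nat.cast_zero, Fin.val_succ]; omega), zero_mul]]
  simp [gammaRow, hα0]

theorem gammaFactors_iff {ω : Fin m → R} {ϖ : Fin n → R} :
    GammaFactors m n α ω ϖ ↔ (∀ c, m < c → gammaRow α n c ⬝ᵥ esymmVec ϖ = 0) ∧
      esymmVec ω = fun c : Fin (m + 1) => gammaRow α n c ⬝ᵥ esymmVec ϖ := by
  have hdot : ∀ c : ℕ, gammaRow α n c ⬝ᵥ esymmVec ϖ =
      ∑ j ∈ range (n + 1), α ((c : ℤ) - (j : ℤ)) * esymmOf ϖ j :=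
    fun c => Fin.sum_univ_eq_sum_range (fun j => α ((c : ℤ) - (j : ℤ)) * esymmOf ϖ j) _
  refine ⟨fun h => ⟨fun c hc => ?_, funext fun c => ?_⟩, fun ⟨htail, hω⟩ c => ?_⟩
  · rw [hdot, h, esymmOf_of_lt ω hc]
  · rw [hdot, h]; rfl
  · rw [← hdot]
    rcases le_or_gt c m with hcm | hmc
    · exact (congrFun hω ⟨c, Nat.lt_succ_of_le hcm⟩).symm
    · rw [htail c hmc, esymmOf_of_lt ω hmc]

theorem existsUnique_gammaRow_dotProduct_eq_zero {K : Type*} [Field K] {α : ℤ → K}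
    (hA : ((gammaTailRows α m n).submatrix id Fin.succ).det ≠ 0)
    (hB : ∀ c, m + n < c → (gammaBordered α m n c).det = 0) :
    ∃! v : Fin (n + 1) → K, v 0 = 1 ∧ ∀ c, m < c → gammaRow α n c ⬝ᵥ v = 0 := by
  have htail : ∀ v, gammaTailRows α m n *ᵥ v = 0 ↔
      ∀ c, m < c → c ≤ m + n → gammaRow α n c ⬝ᵥ v = 0 := by
    refine fun v => ⟨fun h c hmc hcn => ?_, fun h => funext fun i => h _ (by omega) (by omega)⟩
    simpa [gammaTailRows, mulVec, Nat.sub_sub_self hcn] using congrFun h ⟨m + n - c, by omega⟩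
  obtain ⟨v, ⟨hv0, hv⟩, hvuniq⟩ :=
    (gammaTailRows α m n).existsUnique_apply_zero_eq_one_mulVec_eq_zero hA
  refine ⟨v, ⟨hv0, fun c hc => ?_⟩,
    fun w ⟨hw0, hw⟩ => hvuniq w ⟨hw0, (htail w).2 fun c hc _ => hw c hc⟩⟩
  rcases le_or_gt c (m + n) with hcn | hnc
  · exact (htail v).1 hv c hc hcn
  · have hcramer := (gammaBordered α m n c).det_mul_apply_zero_of_mulVec_succ_eq_zero
      (v := v) fun i => congrFun hv i
    rw [hB c hnc, zero_mul] at hcramer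
    exact (mul_eq_zero.1 hcramer.symm).resolve_right hA

end GammaRows

/-- Existence and uniqueness (up to reordering) of the super characteristic roots:
given the nonvanishing of the `n × n` Hankel determinant `det(α_{m−i+j})` and the
vanishing of the `(n+1) × (n+1)` bordered determinants, there exist over an
algebraically closed field unique elements `ω_1,…,ω_m, ϖ_1,…,ϖ_n` with
`Γ(t) ∏ (t − ϖ_i) = ∏ (t − ω_j)`. -/
theorem super_characteristic_roots_exist_unique
    {F : Type*} [Field F] [IsAlgClosed F] (m n : ℕ) (α : ℤ → F)
    (hα0 : α 0 = 1) (hαneg : ∀ z : ℤ, z < 0 → α z = 0)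
    (hA : Matrix.det (fun i j : Fin n =>
        α ((m : ℤ) - ((i : ℕ) + 1) + ((j : ℕ) + 1))) ≠ 0)
    (hA' : ∀ k : ℤ, k < -(n : ℤ) →
      Matrix.det (fun i j : Fin (n + 1) =>
        if (i : ℕ) = 0 then α ((m : ℤ) - k - (n : ℤ) + (j : ℕ))
        else α ((m : ℤ) - ((i : ℕ) - 1 + 1) + ((j : ℕ) + 1))) = 0) :
    ∃ (ω : Fin m → F) (ϖ : Fin n → F),
      GammaFactors m n α ω ϖ ∧
      ∀ (ω' : Fin m → F) (ϖ' : Fin n → F), GammaFactors m n α ω' ϖ' →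
        (Finset.univ.val.map ω' = Finset.univ.val.map ω ∧
         Finset.univ.val.map ϖ' = Finset.univ.val.map ϖ) := by
  have hminor : ((gammaTailRows α m n).submatrix id Fin.succ).det ≠ 0 := by
    rw [gammaTailRows_submatrix_succ, det_permute']
    exact mul_ne_zero ((Equiv.Perm.sign _).isUnit.map (Int.castRingHom F)).ne_zero hA
  have hbordered : ∀ c, m + n < c → (gammaBordered α m n c).det = 0 := fun c hc => by
    rw [gammaBordered_eq_submatrix, det_permute']
    exact mul_eq_zero_of_right _ (hA' _ (by omega))
  obtain ⟨ē, ⟨hē0, hē⟩, hēuniq⟩ := existsUnique_gammaRow_dotProduct_eq_zero hminor hbordered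
  obtain ⟨ϖ, rfl⟩ := exists_esymmVec_eq ē hē0
  obtain ⟨ω, hω⟩ := exists_esymmVec_eq (fun c : Fin (m + 1) => gammaRow α n c ⬝ᵥ esymmVec ϖ)
    (by simpa using gammaRow_zero_dotProduct hα0 hαneg (esymmVec ϖ))
  refine ⟨ω, ϖ, gammaFactors_iff.2 ⟨hē, hω⟩, fun ω' ϖ' h => ?_⟩
  obtain ⟨hϖ'tail, hω'⟩ := gammaFactors_iff.1 h
  have hϖ' : esymmVec ϖ' = esymmVec ϖ := hēuniq _ ⟨esymmVec_zero ϖ', hϖ'tail⟩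
  exact ⟨map_univ_eq_of_esymmVec_eq (by rw [hω', hω, hϖ']), map_univ_eq_of_esymmVec_eq hϖ'⟩

end
end
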